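/- arXiv:1306.5594 — 2 statements merged into one kernel-verified Lean document; each statement's English description precedes it below -/
import Mathlib

section
/- Let G be a graph and U ⊆ V(G). Every stable set S of G has a unique extension to a stable set of the record graph G(U) that meets every clique in ℒ(U), namely S ∪ {r_{S∩U}}. Consequently the stable set polytope of G equals the projection onto ℝ^{V(G)} of the face of the stable set polytope of G(U) obtained by requiring x(L) = 1 for all L ∈ ℒ(U). -/
open Finset
open scoped Classical

variable {V : Type*} [Fintype V] [DecidableEq V]

/-- A stable (independent) set. -/
def IsStable {W : Type*} (G : SimpleGraph W) (S : Finset W) : Prop :=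
  ∀ a ∈ S, ∀ b ∈ S, ¬ G.Adj a b

/-- The record indices: stable subsets of `U`. -/
def RecT (G : SimpleGraph V) (U : Finset V) : Type _ :=
  {T : Finset V // T ⊆ U ∧ IsStable G T}

noncomputable instance (G : SimpleGraph V) (U : Finset V) : Fintype (RecT G U) := by
  unfold RecT; infer_instance

instance (G : SimpleGraph V) (U : Finset V) : DecidableEq (RecT G U) := by
  unfold RecT; infer_instance

/-- The record graph `G(U)`: `G` plus a clique of record vertices `r_T`, one for each
stable `T ⊆ U`, with `r_T` adjacent exactly to `U \ T` among original vertices. -/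
noncomputable def recordGraph (G : SimpleGraph V) (U : Finset V) :
    SimpleGraph (V ⊕ RecT G U) :=
  SimpleGraph.fromRel (fun x y =>
    match x, y with
    | Sum.inl a, Sum.inl b => G.Adj a b
    | Sum.inl a, Sum.inr T => a ∈ U ∧ a ∉ T.1
    | Sum.inr T, Sum.inl a => a ∈ U ∧ a ∉ T.1
    | Sum.inr _, Sum.inr _ => True)

/-- The collection `ℒ(U)` of cliques of `G(U)`: the record clique together with, for
each `v ∈ U`, the clique `{v} ∪ {r_T : v ∉ T}`. -/
noncomputable def recordCliques (G : SimpleGraph V) (U : Finset V) :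
    Set (Finset (V ⊕ RecT G U)) :=
  {(Finset.univ : Finset (RecT G U)).image Sum.inr} ∪
    {L | ∃ v ∈ U, L = insert (Sum.inl v)
      ((Finset.univ.filter (fun T : RecT G U => v ∉ T.1)).image Sum.inr)}

/-- The stable set polytope. -/
noncomputable def stab {W : Type*} [Fintype W] (G : SimpleGraph W) : Set (W → ℝ) :=
  convexHull ℝ {x | ∃ S : Finset W, IsStable G S ∧
    x = fun w => if w ∈ S then (1 : ℝ) else 0}

/-- The polytope `STAB(G, ℒ)`: convex hull of the stable sets meeting all cliques
of `ℒ`. -/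
noncomputable def stabL {W : Type*} [Fintype W] (G : SimpleGraph W)
    (ℒ : Set (Finset W)) : Set (W → ℝ) :=
  convexHull ℝ {x | ∃ S : Finset W, IsStable G S ∧ (∀ L ∈ ℒ, (S ∩ L).Nonempty) ∧
    x = fun w => if w ∈ S then (1 : ℝ) else 0}

/-! A stable set of `G(U)` meeting every clique of `ℒ(U)` meets the record clique `R_U` in
exactly one vertex `r_T`, and `T` is forced to be `S ∩ U`, where `S` is its trace on `V`. So
restriction to `V` is a bijection from these stable sets onto the stable sets of `G`; being
linear, it maps the convex hull of the former onto that of the latter. -/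

set_option linter.unusedSectionVars false

lemma IsStable.mono {W : Type*} {G : SimpleGraph W} {S T : Finset W} (hS : IsStable G S)
    (hTS : T ⊆ S) : IsStable G T :=
  fun a ha b hb => hS a (hTS ha) b (hTS hb)

section RecordGraph

variable (G : SimpleGraph V) (U : Finset V)

@[simp]
lemma recordGraph_adj_inl_inl {a b : V} :
    (recordGraph G U).Adj (Sum.inl a) (Sum.inl b) ↔ G.Adj a b := by
  simp only [recordGraph, SimpleGraph.fromRel_adj, ne_eq, Sum.inl.injEq]
  exact ⟨fun ⟨_, h⟩ => h.elim id .symm, fun h => ⟨h.ne, Or.inl h⟩⟩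

@[simp]
lemma recordGraph_adj_inl_inr {a : V} {T : RecT G U} :
    (recordGraph G U).Adj (Sum.inl a) (Sum.inr T) ↔ a ∈ U ∧ a ∉ T.1 := by
  simp [recordGraph]

@[simp]
lemma recordGraph_adj_inr_inr {T T' : RecT G U} :
    (recordGraph G U).Adj (Sum.inr T) (Sum.inr T') ↔ T ≠ T' := by
  simp [recordGraph]

noncomputable def recordIndex (S : Finset V) (hS : IsStable G S) : RecT G U :=
  ⟨S ∩ U, inter_subset_right, hS.mono inter_subset_left⟩

noncomputable def recordExtension (S : Finset V) (hS : IsStable G S) :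
    Finset (V ⊕ RecT G U) :=
  S.image Sum.inl ∪ {Sum.inr (recordIndex G U S hS)}

variable {G U}

section Extension

variable {S : Finset V}

@[simp]
lemma inl_mem_recordExtension_iff (hS : IsStable G S) {v : V} :
    Sum.inl v ∈ recordExtension G U S hS ↔ v ∈ S := by
  simp [recordExtension]

@[simp]
lemma inr_mem_recordExtension_iff (hS : IsStable G S) {T : RecT G U} :
    Sum.inr T ∈ recordExtension G U S hS ↔ T = recordIndex G U S hS := by
  simp [recordExtension]

lemma isStable_recordExtension (hS : IsStable G S) :
    IsStable (recordGraph G U) (recordExtension G U S hS) := by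
  rintro (v | T) hv (w | T') hw hadj <;>
    simp only [inl_mem_recordExtension_iff, inr_mem_recordExtension_iff] at hv hw
  · exact hS v hv w hw ((recordGraph_adj_inl_inl G U).1 hadj)
  · subst hw
    obtain ⟨hvU, hvS⟩ := (recordGraph_adj_inl_inr G U).1 hadj
    exact hvS (mem_inter.2 ⟨hv, hvU⟩)
  · subst hv
    obtain ⟨hwU, hwS⟩ := (recordGraph_adj_inl_inr G U).1 hadj.symm
    exact hwS (mem_inter.2 ⟨hw, hwU⟩)
  · exact (recordGraph_adj_inr_inr G U).1 hadj (hv.trans hw.symm)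

/-- The record vertex `r_{S ∩ U}` covers the record clique and the clique of every vertex of
`U \ S`; the clique of a vertex of `U ∩ S` is covered by that vertex. -/
lemma recordExtension_inter_nonempty (hS : IsStable G S) {L : Finset (V ⊕ RecT G U)}
    (hL : L ∈ recordCliques G U) :
    (recordExtension G U S hS ∩ L).Nonempty := by
  rcases hL with hL | ⟨v, -, rfl⟩
  · rw [Set.mem_singleton_iff.1 hL]
    exact ⟨Sum.inr (recordIndex G U S hS), by simp⟩
  · by_cases hvS : v ∈ S
    · exact ⟨Sum.inl v, by simp [hvS]⟩
    · exact ⟨Sum.inr (recordIndex G U S hS), mem_inter.2 ⟨by simp,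
        mem_insert_of_mem (mem_image_of_mem _
          (mem_filter.2 ⟨mem_univ _, fun h => hvS (mem_inter.1 h).1⟩))⟩⟩

end Extension

section Characterization

variable {S : Finset V} {Shat : Finset (V ⊕ RecT G U)}

lemma exists_inr_mem_of_forall_inter_nonempty
    (hmeet : ∀ L ∈ recordCliques G U, (Shat ∩ L).Nonempty) :
    ∃ T : RecT G U, Sum.inr T ∈ Shat := by
  obtain ⟨x, hx⟩ := hmeet _ (Or.inl rfl)
  obtain ⟨T, -, rfl⟩ := mem_image.1 (mem_inter.1 hx).2
  exact ⟨T, (mem_inter.1 hx).1⟩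

lemma eq_of_inr_mem_of_inr_mem (hstab : IsStable (recordGraph G U) Shat)
    {T T' : RecT G U} (hT : Sum.inr T ∈ Shat) (hT' : Sum.inr T' ∈ Shat) : T = T' := by
  by_contra hne
  exact hstab _ hT _ hT' ((recordGraph_adj_inr_inr G U).2 hne)

/-- The unique record vertex `r_T` of `Shat` is forced to be `r_{S ∩ U}`: `T ⊆ S` because the
clique of `v ∈ T` must be met, and `S ∩ U ⊆ T` because `r_T` is adjacent to `U \ T`. -/
lemma val_eq_inter_of_inr_mem (hstab : IsStable (recordGraph G U) Shat)
    (hmeet : ∀ L ∈ recordCliques G U, (Shat ∩ L).Nonempty)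
    (htrace : ∀ v : V, Sum.inl v ∈ Shat ↔ v ∈ S)
    {T : RecT G U} (hT : Sum.inr T ∈ Shat) : T.1 = S ∩ U := by
  refine Subset.antisymm (fun v hv => mem_inter.2 ⟨?_, T.2.1 hv⟩) fun v hv => ?_
  · obtain ⟨x, hx⟩ := hmeet _ (Or.inr ⟨v, T.2.1 hv, rfl⟩)
    obtain ⟨hxShat, hxL⟩ := mem_inter.1 hx
    rcases mem_insert.1 hxL with rfl | hx
    · exact (htrace v).1 hxShat
    · obtain ⟨T', hT'v, rfl⟩ := mem_image.1 hx
      rw [eq_of_inr_mem_of_inr_mem hstab hxShat hT] at hT'v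
      exact absurd hv (mem_filter.1 hT'v).2
  · by_contra hvT
    exact hstab _ ((htrace v).2 (mem_inter.1 hv).1) _ hT
      ((recordGraph_adj_inl_inr G U).2 ⟨(mem_inter.1 hv).2, hvT⟩)

lemma eq_recordExtension (hstab : IsStable (recordGraph G U) Shat)
    (hmeet : ∀ L ∈ recordCliques G U, (Shat ∩ L).Nonempty)
    (htrace : ∀ v : V, Sum.inl v ∈ Shat ↔ v ∈ S)
    (hS : IsStable G S) : Shat = recordExtension G U S hS := by
  obtain ⟨T, hT⟩ := exists_inr_mem_of_forall_inter_nonempty hmeet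
  have hTS : T = recordIndex G U S hS :=
    Subtype.ext (val_eq_inter_of_inr_mem hstab hmeet htrace hT)
  ext (v | T')
  · rw [htrace, inl_mem_recordExtension_iff]
  · rw [inr_mem_recordExtension_iff, ← hTS]
    exact ⟨fun hT' => eq_of_inr_mem_of_inr_mem hstab hT' hT, fun h => h ▸ hT⟩

end Characterization

end RecordGraph

lemma image_funLeft_eq_setOf {α β : Type*} (f : α → β) (A : Set (β → ℝ)) :
    LinearMap.funLeft ℝ ℝ f '' A = {x | ∃ y ∈ A, ∀ a, x a = y (f a)} := by
  ext x
  constructor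
  · rintro ⟨y, hy, rfl⟩
    exact ⟨y, hy, fun _ => rfl⟩
  · rintro ⟨y, hy, hxy⟩
    exact ⟨y, hy, funext fun a => (hxy a).symm⟩

/-- Restricting to `V` maps the vertices of `STAB(G(U), ℒ(U))` onto those of `STAB(G)`:
onto thanks to `recordExtension`, into because `G` is an induced subgraph of `G(U)`. -/
lemma image_funLeft_stabL_recordGraph (G : SimpleGraph V) (U : Finset V) :
    LinearMap.funLeft ℝ ℝ Sum.inl '' stabL (recordGraph G U) (recordCliques G U) = stab G := by
  rw [stabL, LinearMap.image_convexHull, stab]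
  congr 1
  ext x
  constructor
  · rintro ⟨_, ⟨Shat, hstab, -, rfl⟩, rfl⟩
    refine ⟨univ.filter (fun v => Sum.inl v ∈ Shat), fun a ha b hb hab => ?_, ?_⟩
    · exact hstab _ (mem_filter.1 ha).2 _ (mem_filter.1 hb).2
        ((recordGraph_adj_inl_inl G U).2 hab)
    · ext v
      simp [LinearMap.funLeft_apply]
  · rintro ⟨S, hS, rfl⟩
    -- `convert`: inside `stabL` the intersection uses classical decidable equality
    refine ⟨_, ⟨recordExtension G U S hS, isStable_recordExtension hS,
      fun L hL => by convert recordExtension_inter_nonempty hS hL, rfl⟩, ?_⟩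
    ext v
    simp [LinearMap.funLeft_apply]

/-- every stable set `S` of `G` has a unique extension to a stable set
of `G(U)` meeting every clique of `ℒ(U)`, namely `S ∪ {r_{S ∩ U}}`; consequently
`STAB(G)` is the projection onto the original coordinates of
`STAB(G(U), ℒ(U))`. -/
theorem stmt10 (G : SimpleGraph V) (U : Finset V) :
    (∀ S : Finset V, IsStable G S →
      ((∃! Shat : Finset (V ⊕ RecT G U),
          IsStable (recordGraph G U) Shat ∧
          (∀ L ∈ recordCliques G U, (Shat ∩ L).Nonempty) ∧
          (∀ v : V, Sum.inl v ∈ Shat ↔ v ∈ S)) ∧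
        (∀ Shat : Finset (V ⊕ RecT G U),
          IsStable (recordGraph G U) Shat →
          (∀ L ∈ recordCliques G U, (Shat ∩ L).Nonempty) →
          (∀ v : V, Sum.inl v ∈ Shat ↔ v ∈ S) →
          ∃ T : RecT G U, T.1 = S ∩ U ∧ Shat = S.image Sum.inl ∪ {Sum.inr T}))) ∧
    stab G = {x : V → ℝ | ∃ y ∈ stabL (recordGraph G U) (recordCliques G U),
      ∀ v : V, x v = y (Sum.inl v)} := by
  refine ⟨fun S hS => ⟨⟨recordExtension G U S hS, ⟨isStable_recordExtension hS,
      fun L hL => recordExtension_inter_nonempty hS hL, fun v => inl_mem_recordExtension_iff hS⟩,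
      fun Shat ⟨hstab, hmeet, htrace⟩ => eq_recordExtension hstab hmeet htrace hS⟩,
    fun Shat hstab hmeet htrace =>
      ⟨recordIndex G U S hS, rfl, eq_recordExtension hstab hmeet htrace hS⟩⟩, ?_⟩
  rw [← image_funLeft_eq_setOf, image_funLeft_stabL_recordGraph]
end

section
/- Let (K, 𝒲) be a generalized amalgam separation of a graph G with K a clique, and let H be the graph on V(G) ∪ ⋃_{W∈𝒲} P_W whose edge set is the union of the edges of the connecting graph G*(K,𝒲) and of all graphs G(K,W), W ∈ 𝒲. Then the map S ↦ S ∩ V(G) is a surjection from the set of stable sets of H meeting every clique in ℒ(K,𝒲) = { K ∪ P_W : W ∈ 𝒲 } onto the set of stable sets of G; consequently STAB(G) = { x_G : x ∈ STAB(H, ℒ(K,𝒲)) }. -/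
open Finset
open scoped Classical

variable {V : Type*} [Fintype V] [DecidableEq V]

/-- The boundary `∂(W)`: vertices of `W` with a neighbor outside `W ∪ K`. -/
noncomputable def bdry (G : SimpleGraph V) (K W : Finset V) : Finset V :=
  W.filter (fun w => ∃ z, z ∉ W ∧ z ∉ K ∧ G.Adj w z)

/-- The equivalence class of `w` in `∂(W)` under "same neighbors outside `W`". -/
noncomputable def cls (G : SimpleGraph V) (K W : Finset V) (w : V) : Finset V :=
  (bdry G K W).filter (fun w' => ∀ z, z ∉ W → (G.Adj w z ↔ G.Adj w' z))

/-- `𝒜_W`: the equivalence classes of the boundary of `W`. -/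
noncomputable def classes (G : SimpleGraph V) (K W : Finset V) : Finset (Finset V) :=
  (bdry G K W).image (cls G K W)

/-- The record vertices: pairs `(W, 𝒳)` with `W ∈ 𝒲` and `𝒳 ⊆ 𝒜_W`. -/
def GARec (G : SimpleGraph V) (K : Finset V) (𝒲 : Finset (Finset V)) : Type _ :=
  {p : Finset V × Finset (Finset V) // p.1 ∈ 𝒲 ∧ p.2 ⊆ classes G K p.1}

noncomputable instance (G : SimpleGraph V) (K : Finset V) (𝒲 : Finset (Finset V)) :
    Fintype (GARec G K 𝒲) := by unfold GARec; infer_instance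

/-- The graph `H`: union of the edges of the connecting graph `G*(K,𝒲)` and of all
graphs `G(K,W)`, `W ∈ 𝒲`, on the vertex set `V ∪ ⋃_W P_W`. -/
noncomputable def gaGraph (G : SimpleGraph V) (K : Finset V) (𝒲 : Finset (Finset V)) :
    SimpleGraph (V ⊕ GARec G K 𝒲) :=
  SimpleGraph.fromRel (fun x y =>
    match x, y with
    | Sum.inl a, Sum.inl b =>
        G.Adj a b ∧ (a ∈ K ∨ b ∈ K ∨ ∃ W ∈ 𝒲, a ∈ W ∧ b ∈ W)
    | Sum.inl a, Sum.inr p =>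
        a ∈ K ∨ (a ∈ bdry G K p.1.1 ∧ ∀ X ∈ p.1.2, a ∉ X)
    | Sum.inr p, Sum.inl a =>
        a ∈ K ∨ (a ∈ bdry G K p.1.1 ∧ ∀ X ∈ p.1.2, a ∉ X)
    | Sum.inr p, Sum.inr p' =>
        p.1.1 = p'.1.1 ∨
          ∃ x y, (∃ X ∈ p.1.2, x ∈ X) ∧ (∃ Y ∈ p'.1.2, y ∈ Y) ∧ G.Adj x y)

/-- The collection `ℒ(K,𝒲)` of cliques `K ∪ P_W`, `W ∈ 𝒲`. -/
noncomputable def gaCliques (G : SimpleGraph V) (K : Finset V) (𝒲 : Finset (Finset V)) :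
    Set (Finset (V ⊕ GARec G K 𝒲)) :=
  {L | ∃ W ∈ 𝒲, L = K.image Sum.inl ∪
    ((Finset.univ : Finset (GARec G K 𝒲)).filter (fun p => p.1.1 = W)).image Sum.inr}

/-!
If a stable set `S'` of `G` meets `K`, it already meets every clique `K ∪ P_W`. Otherwise add,
for every `W`, the record `r_𝒳` where `𝒳` is the set of classes of `𝒜_W` met by `S'`. Such a
record misses every vertex of `S' ∩ ∂(W)`, and an edge between `⋃𝒳` and `⋃𝒳'` (for `W ≠ W'`)
moves, since members of a class have the same neighbours outside `W`, to an edge inside `S'`.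

Conversely, let `S` be stable in `H` and meet every clique of `ℒ(K,𝒲)`. An edge `ab` of `G`
not seen by `H` joins `a ∈ ∂(W)` to `b ∈ ∂(W')` with `W ≠ W'`. As `a` is complete to `K`, the
clique `K ∪ P_W` meets `S` in a record, which must cover `a`; likewise for `b`, and these two
records are adjacent in `G*(K,𝒲)`.
-/

theorem isStable_disjSum {α β : Type*} {H : SimpleGraph (α ⊕ β)} {s : Finset α} {t : Finset β}
    (hs : ∀ a ∈ s, ∀ b ∈ s, ¬ H.Adj (Sum.inl a) (Sum.inl b))
    (ht : ∀ p ∈ t, ∀ q ∈ t, ¬ H.Adj (Sum.inr p) (Sum.inr q))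
    (hst : ∀ a ∈ s, ∀ p ∈ t, ¬ H.Adj (Sum.inl a) (Sum.inr p)) :
    IsStable H (s.disjSum t) := by
  rintro (a | p) hx (b | q) hy <;>
    simp only [Finset.inl_mem_disjSum, Finset.inr_mem_disjSum] at hx hy
  · exact hs a hx b hy
  · exact hst a hx q hy
  · exact fun h => hst b hy p hx h.symm
  · exact ht p hx q hy

theorem stab_eq_restrict_stabL {U α : Type*} [Fintype U] [Fintype α] [DecidableEq α]
    {G : SimpleGraph U} {H : SimpleGraph α} {ℒ : Set (Finset α)} {f : U → α}
    (hstable : ∀ S : Finset α, IsStable H S → (∀ L ∈ ℒ, (S ∩ L).Nonempty) →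
      IsStable G (Finset.univ.filter (fun v => f v ∈ S)))
    (hlift : ∀ S' : Finset U, IsStable G S' → ∃ S : Finset α, IsStable H S ∧
      (∀ L ∈ ℒ, (S ∩ L).Nonempty) ∧ Finset.univ.filter (fun v => f v ∈ S) = S') :
    stab G = {x | ∃ y ∈ stabL H ℒ, ∀ v, x v = y (f v)} := by
  have hrestrict : {x : U → ℝ | ∃ y ∈ stabL H ℒ, ∀ v, x v = y (f v)} =
      LinearMap.funLeft ℝ ℝ f '' stabL H ℒ := by
    ext x
    exact exists_congr fun y => and_congr_right fun _ => funext_iff.symm.trans eq_comm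
  rw [hrestrict, stab, stabL, LinearMap.image_convexHull]
  congr 1
  ext x
  simp only [Set.mem_ofPred_eq, Set.mem_image]
  constructor
  · rintro ⟨S', hS', rfl⟩
    obtain ⟨S, hS, hL, rfl⟩ := hlift S' hS'
    refine ⟨_, ⟨S, hS, fun L hL' => ?_, rfl⟩, ?_⟩
    · convert hL L hL'
    · ext v; simp
  · rintro ⟨y, ⟨S, hS, hL, rfl⟩, rfl⟩
    refine ⟨_, hstable S hS fun L hL' => ?_, ?_⟩
    · convert hL L hL'
    · ext v; simp

section Records

variable {G : SimpleGraph V} {K W : Finset V}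

theorem mem_bdry {w : V} :
    w ∈ bdry G K W ↔ w ∈ W ∧ ∃ z, z ∉ W ∧ z ∉ K ∧ G.Adj w z :=
  Finset.mem_filter

theorem mem_cls_self {w : V} (hw : w ∈ bdry G K W) : w ∈ cls G K W w :=
  Finset.mem_filter.mpr ⟨hw, fun _ _ => Iff.rfl⟩

theorem cls_mem_classes {w : V} (hw : w ∈ bdry G K W) : cls G K W w ∈ classes G K W :=
  Finset.mem_image_of_mem _ hw

theorem mem_bdry_of_mem_classes {X : Finset V} (hX : X ∈ classes G K W) {x : V}
    (hx : x ∈ X) : x ∈ bdry G K W := by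
  obtain ⟨w, -, rfl⟩ := Finset.mem_image.mp hX
  exact (Finset.mem_filter.mp hx).1

theorem adj_iff_of_mem_classes {X : Finset V} (hX : X ∈ classes G K W) {x s z : V}
    (hx : x ∈ X) (hs : s ∈ X) (hz : z ∉ W) : G.Adj x z ↔ G.Adj s z := by
  obtain ⟨w, -, rfl⟩ := Finset.mem_image.mp hX
  exact ((Finset.mem_filter.mp hx).2 z hz).symm.trans ((Finset.mem_filter.mp hs).2 z hz)

end Records

section Amalgam

variable {G : SimpleGraph V} {K : Finset V} {𝒲 : Finset (Finset V)}

theorem gaGraph_adj_inl_inl {a b : V} :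
    (gaGraph G K 𝒲).Adj (Sum.inl a) (Sum.inl b) ↔
      G.Adj a b ∧ (a ∈ K ∨ b ∈ K ∨ ∃ W ∈ 𝒲, a ∈ W ∧ b ∈ W) := by
  simp only [gaGraph, SimpleGraph.fromRel_adj, ne_eq, Sum.inl.injEq]
  constructor
  · rintro ⟨-, ⟨hab, h⟩ | ⟨hba, h⟩⟩
    · exact ⟨hab, h⟩
    · exact ⟨hba.symm, by aesop⟩
  · rintro ⟨hab, h⟩
    exact ⟨hab.ne, Or.inl ⟨hab, h⟩⟩

theorem gaGraph_adj_inl_inr {a : V} {p : GARec G K 𝒲} :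
    (gaGraph G K 𝒲).Adj (Sum.inl a) (Sum.inr p) ↔
      a ∈ K ∨ (a ∈ bdry G K p.1.1 ∧ ∀ X ∈ p.1.2, a ∉ X) := by
  simp [gaGraph, SimpleGraph.fromRel_adj]

theorem gaGraph_adj_inr_inr {p q : GARec G K 𝒲} :
    (gaGraph G K 𝒲).Adj (Sum.inr p) (Sum.inr q) ↔ p ≠ q ∧ (p.1.1 = q.1.1 ∨
      ∃ x y, (∃ X ∈ p.1.2, x ∈ X) ∧ (∃ Y ∈ q.1.2, y ∈ Y) ∧ G.Adj x y) := by
  simp only [gaGraph, SimpleGraph.fromRel_adj, ne_eq, Sum.inr.injEq]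
  constructor
  · rintro ⟨hpq, h | h | ⟨x, y, hx, hy, hxy⟩⟩
    · exact ⟨hpq, h⟩
    · exact ⟨hpq, Or.inl h.symm⟩
    · exact ⟨hpq, Or.inr ⟨y, x, hy, hx, hxy.symm⟩⟩
  · rintro ⟨hpq, h⟩
    exact ⟨hpq, Or.inl h⟩

theorem exists_record_mem_covering {S : Finset (V ⊕ GARec G K 𝒲)}
    (hS : IsStable (gaGraph G K 𝒲) S) (hL : ∀ L ∈ gaCliques G K 𝒲, (S ∩ L).Nonempty)
    {W : Finset V} (hW : W ∈ 𝒲) {c : V} (hc : c ∈ bdry G K W) (hcK : ∀ k ∈ K, G.Adj c k)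
    (hcS : Sum.inl c ∈ S) :
    ∃ p : GARec G K 𝒲, Sum.inr p ∈ S ∧ p.1.1 = W ∧ ∃ X ∈ p.1.2, c ∈ X := by
  obtain ⟨u, hu⟩ := hL _ ⟨W, hW, rfl⟩
  obtain ⟨huS, huL⟩ := Finset.mem_inter.mp hu
  rcases Finset.mem_union.mp huL with huK | huP
  · obtain ⟨k, hk, rfl⟩ := Finset.mem_image.mp huK
    exact absurd (gaGraph_adj_inl_inl.mpr ⟨hcK k hk, Or.inr (Or.inl hk)⟩) (hS _ hcS _ huS)
  · obtain ⟨p, hp, rfl⟩ := Finset.mem_image.mp huP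
    have hpW : p.1.1 = W := (Finset.mem_filter.mp hp).2
    refine ⟨p, huS, hpW, ?_⟩
    by_contra! hcp
    exact hS _ hcS _ huS (gaGraph_adj_inl_inr.mpr (Or.inr ⟨hpW ▸ hc, hcp⟩))

theorem isStable_inl_preimage (hcover : 𝒲.sup id = Finset.univ \ K)
    (hdisj : ∀ W ∈ 𝒲, ∀ W' ∈ 𝒲, W ≠ W' → Disjoint W W')
    (hfull : ∀ W ∈ 𝒲, ∀ w ∈ W, (∃ z, z ∉ W ∧ z ∉ K ∧ G.Adj w z) → ∀ k ∈ K, G.Adj w k)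
    {S : Finset (V ⊕ GARec G K 𝒲)} (hS : IsStable (gaGraph G K 𝒲) S)
    (hL : ∀ L ∈ gaCliques G K 𝒲, (S ∩ L).Nonempty) :
    IsStable G (Finset.univ.filter (fun v : V => Sum.inl v ∈ S)) := by
  intro a ha b hb hab
  simp only [Finset.mem_filter, Finset.mem_univ, true_and] at ha hb
  have hpart : ∀ v ∉ K, ∃ W ∈ 𝒲, v ∈ W := fun v hv => by
    simpa using (hcover.symm ▸ Finset.mem_sdiff.mpr ⟨Finset.mem_univ v, hv⟩ : v ∈ 𝒲.sup id)
  by_cases haK : a ∈ K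
  · exact hS _ ha _ hb (gaGraph_adj_inl_inl.mpr ⟨hab, Or.inl haK⟩)
  by_cases hbK : b ∈ K
  · exact hS _ ha _ hb (gaGraph_adj_inl_inl.mpr ⟨hab, Or.inr (Or.inl hbK)⟩)
  obtain ⟨Wa, hWa, haWa⟩ := hpart a haK
  obtain ⟨Wb, hWb, hbWb⟩ := hpart b hbK
  have hWab : Wa ≠ Wb := by
    rintro rfl
    exact hS _ ha _ hb (gaGraph_adj_inl_inl.mpr ⟨hab, Or.inr (Or.inr ⟨Wa, hWa, haWa, hbWb⟩)⟩)
  have hbWa : b ∉ Wa := Finset.disjoint_right.mp (hdisj Wa hWa Wb hWb hWab) hbWb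
  have haWb : a ∉ Wb := Finset.disjoint_left.mp (hdisj Wa hWa Wb hWb hWab) haWa
  have ha_out : ∃ z, z ∉ Wa ∧ z ∉ K ∧ G.Adj a z := ⟨b, hbWa, hbK, hab⟩
  have hb_out : ∃ z, z ∉ Wb ∧ z ∉ K ∧ G.Adj b z := ⟨a, haWb, haK, hab.symm⟩
  obtain ⟨p, hpS, hpW, hap⟩ := exists_record_mem_covering hS hL hWa
    (mem_bdry.mpr ⟨haWa, ha_out⟩) (hfull Wa hWa a haWa ha_out) ha
  obtain ⟨q, hqS, hqW, hbq⟩ := exists_record_mem_covering hS hL hWb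
    (mem_bdry.mpr ⟨hbWb, hb_out⟩) (hfull Wb hWb b hbWb hb_out) hb
  have hpq : p ≠ q := by rintro rfl; exact hWab (hpW.symm.trans hqW)
  exact hS _ hpS _ hqS (gaGraph_adj_inr_inr.mpr ⟨hpq, Or.inr ⟨a, b, hap, hbq, hab⟩⟩)

variable (G K) in
noncomputable def hitClasses (W S' : Finset V) : Finset (Finset V) :=
  (classes G K W).filter (fun X => (X ∩ S').Nonempty)

variable (G K 𝒲) in
noncomputable def hitRecords (S' : Finset V) : Finset (GARec G K 𝒲) :=
  Finset.univ.filter (fun p => p.1.2 = hitClasses G K p.1.1 S')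

theorem hitRecords_meets_gaCliques (S' : Finset V) :
    ∀ L ∈ gaCliques G K 𝒲, (S'.disjSum (hitRecords G K 𝒲 S') ∩ L).Nonempty := by
  rintro L ⟨W, hW, rfl⟩
  let p : GARec G K 𝒲 := ⟨(W, hitClasses G K W S'), hW, Finset.filter_subset _ _⟩
  refine ⟨Sum.inr p, Finset.mem_inter.mpr ⟨?_, ?_⟩⟩
  · exact Finset.inr_mem_disjSum.mpr (Finset.mem_filter.mpr ⟨Finset.mem_univ p, rfl⟩)
  · exact Finset.mem_union_right _
      (Finset.mem_image_of_mem _ (Finset.mem_filter.mpr ⟨Finset.mem_univ p, rfl⟩))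

theorem not_adj_inl_hitRecords {S' : Finset V} (hS'K : Disjoint S' K) {a : V} (ha : a ∈ S')
    {p : GARec G K 𝒲} (hp : p ∈ hitRecords G K 𝒲 S') :
    ¬ (gaGraph G K 𝒲).Adj (Sum.inl a) (Sum.inr p) := by
  have hp : p.1.2 = hitClasses G K p.1.1 S' := (Finset.mem_filter.mp hp).2
  rw [gaGraph_adj_inl_inr]
  rintro (haK | ⟨ha_bdry, ha_out⟩)
  · exact Finset.disjoint_left.mp hS'K ha haK
  · refine ha_out _ ?_ (mem_cls_self ha_bdry)
    rw [hp, hitClasses, Finset.mem_filter]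
    exact ⟨cls_mem_classes ha_bdry, a, Finset.mem_inter.mpr ⟨mem_cls_self ha_bdry, ha⟩⟩

theorem not_adj_hitRecords (hdisj : ∀ W ∈ 𝒲, ∀ W' ∈ 𝒲, W ≠ W' → Disjoint W W')
    {S' : Finset V} (hS' : IsStable G S') {p q : GARec G K 𝒲}
    (hp : p ∈ hitRecords G K 𝒲 S') (hq : q ∈ hitRecords G K 𝒲 S') :
    ¬ (gaGraph G K 𝒲).Adj (Sum.inr p) (Sum.inr q) := by
  have hp : p.1.2 = hitClasses G K p.1.1 S' := (Finset.mem_filter.mp hp).2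
  have hq : q.1.2 = hitClasses G K q.1.1 S' := (Finset.mem_filter.mp hq).2
  rw [gaGraph_adj_inr_inr]
  rintro ⟨hpq, hW | ⟨x, y, ⟨X, hX, hxX⟩, ⟨Y, hY, hyY⟩, hxy⟩⟩
  · exact hpq (Subtype.ext (Prod.ext hW (by rw [hp, hq, hW])))
  have hW : p.1.1 ≠ q.1.1 := fun hW => hpq (Subtype.ext (Prod.ext hW (by rw [hp, hq, hW])))
  rw [hp, hitClasses, Finset.mem_filter] at hX
  rw [hq, hitClasses, Finset.mem_filter] at hY
  obtain ⟨hX, s, hs⟩ := hX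
  obtain ⟨hY, t, ht⟩ := hY
  obtain ⟨hsX, hsS'⟩ := Finset.mem_inter.mp hs
  obtain ⟨htY, htS'⟩ := Finset.mem_inter.mp ht
  have hd := hdisj _ p.2.1 _ q.2.1 hW
  have hy : y ∉ p.1.1 :=
    Finset.disjoint_right.mp hd (mem_bdry.mp (mem_bdry_of_mem_classes hY hyY)).1
  have hs : s ∉ q.1.1 :=
    Finset.disjoint_left.mp hd (mem_bdry.mp (mem_bdry_of_mem_classes hX hsX)).1
  have hsy : G.Adj s y := (adj_iff_of_mem_classes hX hxX hsX hy).mp hxy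
  exact hS' s hsS' t htS' ((adj_iff_of_mem_classes hY hyY htY hs).mp hsy.symm).symm

theorem exists_lift_of_isStable (hdisj : ∀ W ∈ 𝒲, ∀ W' ∈ 𝒲, W ≠ W' → Disjoint W W')
    {S' : Finset V} (hS' : IsStable G S') :
    ∃ S : Finset (V ⊕ GARec G K 𝒲), IsStable (gaGraph G K 𝒲) S ∧
      (∀ L ∈ gaCliques G K 𝒲, (S ∩ L).Nonempty) ∧
      Finset.univ.filter (fun v : V => Sum.inl v ∈ S) = S' := by
  have hS'_inl : ∀ a ∈ S', ∀ b ∈ S', ¬ (gaGraph G K 𝒲).Adj (Sum.inl a) (Sum.inl b) :=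
    fun a ha b hb h => hS' a ha b hb (gaGraph_adj_inl_inl.mp h).1
  by_cases hS'K : Disjoint S' K
  · refine ⟨S'.disjSum (hitRecords G K 𝒲 S'), isStable_disjSum hS'_inl
      (fun p hp q hq => not_adj_hitRecords hdisj hS' hp hq)
      (fun a ha p hp => not_adj_inl_hitRecords hS'K ha hp),
      hitRecords_meets_gaCliques S', by ext; simp⟩
  · obtain ⟨k, hkS', hkK⟩ := Finset.not_disjoint_iff.mp hS'K
    refine ⟨S'.disjSum ∅, isStable_disjSum hS'_inl (by simp) (by simp), ?_, by ext; simp⟩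
    rintro L ⟨W, -, rfl⟩
    exact ⟨Sum.inl k, by simp [hkS', hkK]⟩

end Amalgam

theorem stmt17_general (G : SimpleGraph V) (K : Finset V) (𝒲 : Finset (Finset V))
    (hcover : 𝒲.sup id = Finset.univ \ K)
    (hdisj : ∀ W ∈ 𝒲, ∀ W' ∈ 𝒲, W ≠ W' → Disjoint W W')
    (hfull : ∀ W ∈ 𝒲, ∀ w ∈ W, (∃ z, z ∉ W ∧ z ∉ K ∧ G.Adj w z) →
      ∀ k ∈ K, G.Adj w k) :
    (∀ S : Finset (V ⊕ GARec G K 𝒲),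
      IsStable (gaGraph G K 𝒲) S → (∀ L ∈ gaCliques G K 𝒲, (S ∩ L).Nonempty) →
      IsStable G (Finset.univ.filter (fun v : V => Sum.inl v ∈ S))) ∧
    (∀ S' : Finset V, IsStable G S' →
      ∃ S : Finset (V ⊕ GARec G K 𝒲),
        IsStable (gaGraph G K 𝒲) S ∧ (∀ L ∈ gaCliques G K 𝒲, (S ∩ L).Nonempty) ∧
        Finset.univ.filter (fun v : V => Sum.inl v ∈ S) = S') ∧
    stab G = {x : V → ℝ | ∃ y ∈ stabL (gaGraph G K 𝒲) (gaCliques G K 𝒲),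
      ∀ v : V, x v = y (Sum.inl v)} := by
  have hrestrict := fun (S : Finset (V ⊕ GARec G K 𝒲)) =>
    isStable_inl_preimage (S := S) hcover hdisj hfull
  have hlift := fun S' (hS' : IsStable G S') =>
    exists_lift_of_isStable (K := K) (𝒲 := 𝒲) hdisj hS'
  exact ⟨hrestrict, hlift, stab_eq_restrict_stabL hrestrict hlift⟩

/-- for a generalized amalgam separation `(K, 𝒲)` with `K` a clique,
`S ↦ S ∩ V(G)` maps the stable sets of `H` meeting every clique of `ℒ(K,𝒲)` onto
the stable sets of `G`; consequently `STAB(G)` is the projection of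
`STAB(H, ℒ(K,𝒲))` onto the original coordinates. -/
theorem stmt17 (G : SimpleGraph V) (K : Finset V) (𝒲 : Finset (Finset V))
    (hK : ∀ a ∈ K, ∀ b ∈ K, a ≠ b → G.Adj a b)
    (hcover : 𝒲.sup id = Finset.univ \ K)
    (hdisj : ∀ W ∈ 𝒲, ∀ W' ∈ 𝒲, W ≠ W' → Disjoint W W')
    (hne : ∀ W ∈ 𝒲, W.Nonempty)
    (hfull : ∀ W ∈ 𝒲, ∀ w ∈ W, (∃ z, z ∉ W ∧ z ∉ K ∧ G.Adj w z) →
      ∀ k ∈ K, G.Adj w k) :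
    (∀ S : Finset (V ⊕ GARec G K 𝒲),
      IsStable (gaGraph G K 𝒲) S → (∀ L ∈ gaCliques G K 𝒲, (S ∩ L).Nonempty) →
      IsStable G (Finset.univ.filter (fun v : V => Sum.inl v ∈ S))) ∧
    (∀ S' : Finset V, IsStable G S' →
      ∃ S : Finset (V ⊕ GARec G K 𝒲),
        IsStable (gaGraph G K 𝒲) S ∧ (∀ L ∈ gaCliques G K 𝒲, (S ∩ L).Nonempty) ∧
        Finset.univ.filter (fun v : V => Sum.inl v ∈ S) = S') ∧
    stab G = {x : V → ℝ | ∃ y ∈ stabL (gaGraph G K 𝒲) (gaCliques G K 𝒲),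
      ∀ v : V, x v = y (Sum.inl v)} :=
  stmt17_general G K 𝒲 hcover hdisj hfull
end
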